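/- Let n ≥ 1, let A be a nonempty finite set, and for each a ∈ A let M_a be a positive semidefinite complex n×n matrix with M_✓ := Σ_{a∈A} M_a ≼ 𝟙. Let S be the positive semidefinite square root of M_✓. Then there exists a family of positive semidefinite matrices (M̄_a)_{a∈A} such that: (a) P := Σ_{a∈A} M̄_a is an orthogonal projection (P is Hermitian and P² = P) with P · M_✓ = M_✓; and (b) for every complex n×n matrix ρ, Tr(M̄_a · (S ρ S)) = Tr(M_a ρ) for every a ∈ A. (This shows every lossy measurement decomposes as a filter with Kraus operator S followed by a measurement that is lossless on the support of M_✓.) -/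

import Mathlib

open scoped ComplexOrder

/-- The positive semidefinite square root of a positive semidefinite matrix (the definition
`Matrix.PosSemidef.sqrt` of the older Mathlib, since removed). -/
noncomputable def Matrix.PosSemidef.sqrt {n 𝕜 : Type*} [Fintype n] [RCLike 𝕜] [DecidableEq n]
    {A : Matrix n n 𝕜} (hA : A.PosSemidef) : Matrix n n 𝕜 :=
  hA.1.eigenvectorUnitary.1 * Matrix.diagonal ((↑) ∘ (√·) ∘ hA.1.eigenvalues) *
  (star hA.1.eigenvectorUnitary : Matrix n n 𝕜)

/-- A finite sum of positive semidefinite matrices is positive semidefinite. -/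
lemma posSemidef_fintype_sum {n : ℕ} {A : Type*} [Fintype A]
    (M : A → Matrix (Fin n) (Fin n) ℂ) (hM : ∀ a, (M a).PosSemidef) :
    (∑ a, M a).PosSemidef :=
  Finset.sum_induction M Matrix.PosSemidef (fun _ _ ha hb => ha.add hb)
    Matrix.PosSemidef.zero (fun a _ => hM a)

open Matrix in
/-- Every lossy measurement `(M_a)_{a∈A}` with `M_✓ := Σ_a M_a ≼ 𝟙` decomposes as
the filter with Kraus operator `S = √M_✓` followed by a measurement `(M̄_a)` that is lossless on
the support of `M_✓`: the `M̄_a` are positive semidefinite, `P := Σ_a M̄_a` is an orthogonal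
projection with `P M_✓ = M_✓`, and `Tr(M̄_a (S ρ S)) = Tr(M_a ρ)` for every matrix `ρ`. -/
theorem lossy_measurement_filter_decomposition
    (n : ℕ) (hn : 1 ≤ n) (A : Type*) [Fintype A] [Nonempty A]
    (M : A → Matrix (Fin n) (Fin n) ℂ)
    (hM : ∀ a, (M a).PosSemidef)
    (hMle : ((1 : Matrix (Fin n) (Fin n) ℂ) - ∑ a, M a).PosSemidef) :
    ∃ Mbar : A → Matrix (Fin n) (Fin n) ℂ,
      (∀ a, (Mbar a).PosSemidef) ∧
      (∑ a, Mbar a).IsHermitian ∧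
      (∑ a, Mbar a) * (∑ a, Mbar a) = (∑ a, Mbar a) ∧
      (∑ a, Mbar a) * (∑ a, M a) = (∑ a, M a) ∧
      ∀ (ρ : Matrix (Fin n) (Fin n) ℂ) (a : A),
        Matrix.trace (Mbar a * ((posSemidef_fintype_sum M hM).sqrt * ρ *
            (posSemidef_fintype_sum M hM).sqrt)) =
          Matrix.trace (M a * ρ) := by
  classical
  set hT : (∑ a, M a).PosSemidef := posSemidef_fintype_sum M hM with hTdef
  set U : Matrix (Fin n) (Fin n) ℂ := (hT.1.eigenvectorUnitary : Matrix (Fin n) (Fin n) ℂ)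
    with hUdef
  have hU : star U * U = 1 := by simp [hUdef]
  set μ : Fin n → ℝ := hT.1.eigenvalues with hμdef
  set C : (Fin n → ℂ) → Matrix (Fin n) (Fin n) ℂ :=
    fun f => U * Matrix.diagonal f * star U with hCdef
  have hCmul : ∀ f g, C f * C g = C (f * g) := by
    intro f g
    show U * Matrix.diagonal f * star U * (U * Matrix.diagonal g * star U)
        = U * Matrix.diagonal (f * g) * star U
    calc U * Matrix.diagonal f * star U * (U * Matrix.diagonal g * star U)
        = U * Matrix.diagonal f * (star U * U * (Matrix.diagonal g * star U)) := by
          simp only [mul_assoc]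
      _ = U * Matrix.diagonal f * (Matrix.diagonal g * star U) := by rw [hU, one_mul]
      _ = U * (Matrix.diagonal f * Matrix.diagonal g) * star U := by simp only [mul_assoc]
      _ = U * Matrix.diagonal (f * g) * star U := by rw [Matrix.diagonal_mul_diagonal]; rfl
  have hCherm : ∀ f : Fin n → ℂ, star f = f → (C f)ᴴ = C f := by
    intro f hf
    show (U * Matrix.diagonal f * star U)ᴴ = U * Matrix.diagonal f * star U
    simp only [Matrix.star_eq_conjTranspose, Matrix.conjTranspose_mul,
      Matrix.conjTranspose_conjTranspose, Matrix.diagonal_conjTranspose, hf, mul_assoc]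
  -- the square root, explicitly
  set d : Fin n → ℂ := fun i => (Real.sqrt (μ i) : ℂ) with hddef
  have hS : hT.sqrt = C d := rfl
  set dinv : Fin n → ℂ := fun i => (d i)⁻¹ with hdinvdef
  set e : Fin n → ℂ := fun i => if μ i = 0 then 0 else 1 with hedef
  have hd0 : ∀ i, μ i = 0 → d i = 0 := by
    intro i hi
    show ((Real.sqrt (μ i) : ℝ) : ℂ) = 0
    rw [hi, Real.sqrt_zero, Complex.ofReal_zero]
  have hdne : ∀ i, μ i ≠ 0 → d i ≠ 0 := by
    intro i hi
    have hpos : 0 < μ i := lt_of_le_of_ne (hT.eigenvalues_nonneg i) (Ne.symm hi)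
    exact Complex.ofReal_ne_zero.mpr (Real.sqrt_pos.mpr hpos).ne'
  have hde : d * dinv = e := by
    funext i
    by_cases hi : μ i = 0
    · show d i * (d i)⁻¹ = if μ i = 0 then 0 else 1
      rw [hd0 i hi, zero_mul, if_pos hi]
    · show d i * (d i)⁻¹ = if μ i = 0 then 0 else 1
      rw [mul_inv_cancel₀ (hdne i hi), if_neg hi]
  have hdinvd : dinv * d = e := by rw [mul_comm, hde]
  have heid : e * d = d := by
    funext i
    show (if μ i = 0 then (0 : ℂ) else 1) * d i = d i
    by_cases hi : μ i = 0
    · rw [if_pos hi, zero_mul, hd0 i hi]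
    · rw [if_neg hi, one_mul]
  have hdei : d * e = d := by rw [mul_comm, heid]
  have hee : e * e = e := by
    funext i
    show (if μ i = 0 then (0 : ℂ) else 1) * (if μ i = 0 then (0 : ℂ) else 1)
        = if μ i = 0 then (0 : ℂ) else 1
    by_cases hi : μ i = 0 <;> simp [hi]
  -- the projection and the pseudo-inverse
  set Sinv : Matrix (Fin n) (Fin n) ℂ := C dinv with hSinvdef
  set P : Matrix (Fin n) (Fin n) ℂ := C e with hPdef
  have hstar_dinv : star dinv = dinv := by
    funext i
    show star (d i)⁻¹ = (d i)⁻¹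
    rw [star_inv₀]
    congr 1
    show star ((Real.sqrt (μ i) : ℝ) : ℂ) = _
    rw [Complex.star_def, Complex.conj_ofReal]
  have hstar_e : star e = e := by
    funext i
    show star (if μ i = 0 then (0 : ℂ) else 1) = if μ i = 0 then (0 : ℂ) else 1
    by_cases hi : μ i = 0 <;> simp [hi]
  have hSinvHerm : Sinvᴴ = Sinv := hCherm dinv hstar_dinv
  have hPHerm : Pᴴ = P := hCherm e hstar_e
  have hSinvS : Sinv * hT.sqrt = P := by rw [hS, hSinvdef, hCmul, hdinvd]
  have hSSinv : hT.sqrt * Sinv = P := by rw [hS, hSinvdef, hCmul, hde]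
  have hSP : hT.sqrt * P = hT.sqrt := by rw [hS, hPdef, hCmul, hdei, ← hS]
  have hPP : P * P = P := by rw [hPdef, hCmul, hee]
  have hsqrt_mul_self : hT.sqrt * hT.sqrt = ∑ a, M a := by
    rw [hS, hCmul]
    conv_rhs => rw [hT.1.spectral_theorem, Unitary.conjStarAlgAut_apply]
    have hdd : d * d = RCLike.ofReal ∘ hT.1.eigenvalues := by
      funext i
      show ((Real.sqrt (μ i) : ℝ) : ℂ) * ((Real.sqrt (μ i) : ℝ) : ℂ) = ((μ i : ℝ) : ℂ)
      rw [← Complex.ofReal_mul, Real.mul_self_sqrt (hT.eigenvalues_nonneg i)]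
    rw [hdd]
  -- kernel argument: M a * P = M a
  have hMP : ∀ a, M a * P = M a := by
    intro a
    have key : M a * (1 - P) = 0 := by
      have hvan : ∀ x : Fin n → ℂ, (M a * (1 - P)) *ᵥ x = 0 := by
        intro x
        set v : Fin n → ℂ := (1 - P) *ᵥ x with hvdef
        have hSv : hT.sqrt *ᵥ v = 0 := by
          have hzero : hT.sqrt * (1 - P) = 0 := by
            rw [mul_sub, mul_one, hSP, sub_self]
          rw [hvdef, Matrix.mulVec_mulVec, hzero, Matrix.zero_mulVec]
        have hTv : star v ⬝ᵥ (∑ a, M a) *ᵥ v = 0 := by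
          have hz : (∑ a, M a) *ᵥ v = 0 := by
            rw [← hsqrt_mul_self, ← Matrix.mulVec_mulVec, hSv, Matrix.mulVec_zero]
          rw [hz, dotProduct_zero]
        have hrest : ((∑ b ∈ Finset.univ.erase a, M b)).PosSemidef :=
          Finset.sum_induction M Matrix.PosSemidef (fun _ _ ha hb => ha.add hb)
            Matrix.PosSemidef.zero (fun b _ => hM b)
        have hsplit : M a + ∑ b ∈ Finset.univ.erase a, M b = ∑ b, M b := by
          rw [Finset.add_sum_erase _ _ (Finset.mem_univ a)]
        have hle : star v ⬝ᵥ (M a) *ᵥ v = 0 := by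
          have h1 : 0 ≤ star v ⬝ᵥ (M a) *ᵥ v := (hM a).dotProduct_mulVec_nonneg v
          have h2 : 0 ≤ star v ⬝ᵥ (∑ b ∈ Finset.univ.erase a, M b) *ᵥ v := hrest.dotProduct_mulVec_nonneg v
          have h3 : star v ⬝ᵥ (M a) *ᵥ v +
              star v ⬝ᵥ (∑ b ∈ Finset.univ.erase a, M b) *ᵥ v = 0 := by
            rw [← dotProduct_add, ← Matrix.add_mulVec, hsplit, hTv]
          have h4 : star v ⬝ᵥ (M a) *ᵥ v ≤ 0 := by
            calc star v ⬝ᵥ (M a) *ᵥ v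
                ≤ star v ⬝ᵥ (M a) *ᵥ v + star v ⬝ᵥ (∑ b ∈ Finset.univ.erase a, M b) *ᵥ v :=
                  le_add_of_nonneg_right h2
              _ = 0 := h3
          exact le_antisymm h4 h1
        have hMv := ((hM a).dotProduct_mulVec_zero_iff v).mp hle
        rw [← Matrix.mulVec_mulVec, ← hvdef, hMv]
      ext i j
      have h := congrFun (hvan (Pi.single j 1)) i
      simpa [Matrix.mulVec_single] using h
    rw [mul_sub, mul_one] at key
    exact (sub_eq_zero.mp key).symm
  have hPM : ∀ a, P * M a = M a := by
    intro a
    have h := congrArg Matrix.conjTranspose (hMP a)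
    rwa [Matrix.conjTranspose_mul, hPHerm, (hM a).1.eq] at h
  -- the sum of the new effects is P
  have hsum : (∑ a, Sinv * M a * Sinv) = P := by
    rw [← Finset.sum_mul, ← Finset.mul_sum]
    calc Sinv * (∑ a, M a) * Sinv
        = Sinv * (hT.sqrt * hT.sqrt) * Sinv := by rw [hsqrt_mul_self]
      _ = (Sinv * hT.sqrt) * (hT.sqrt * Sinv) := by simp only [mul_assoc]
      _ = P * P := by rw [hSinvS, hSSinv]
      _ = P := hPP
  -- the decomposition
  refine ⟨fun a => Sinv * M a * Sinv, ?_, ?_, ?_, ?_, ?_⟩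
  · intro a
    have h := (hM a).conjTranspose_mul_mul_same Sinv
    rwa [hSinvHerm] at h
  · rw [hsum]; exact hPHerm
  · rw [hsum, hPP]
  · rw [hsum, Finset.mul_sum]
    exact Finset.sum_congr rfl fun a _ => hPM a
  · intro ρ a
    have h1 : Sinv * M a * Sinv * (hT.sqrt * ρ * hT.sqrt)
        = Sinv * M a * ρ * hT.sqrt := by
      calc Sinv * M a * Sinv * (hT.sqrt * ρ * hT.sqrt)
          = Sinv * M a * (Sinv * hT.sqrt) * (ρ * hT.sqrt) := by simp only [mul_assoc]
        _ = Sinv * (M a * P) * (ρ * hT.sqrt) := by rw [hSinvS]; simp only [mul_assoc]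
        _ = Sinv * M a * ρ * hT.sqrt := by rw [hMP]; simp only [mul_assoc]
    rw [h1, Matrix.trace_mul_comm]
    have h2 : hT.sqrt * (Sinv * M a * ρ) = M a * ρ := by
      calc hT.sqrt * (Sinv * M a * ρ)
          = (hT.sqrt * Sinv) * (M a * ρ) := by simp only [mul_assoc]
        _ = M a * ρ := by rw [hSSinv, ← mul_assoc, hPM]
    rw [h2]
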